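/- Let n be an integer (possibly zero) and let g : (0,∞) → ℂ be a twice differentiable function satisfying the homogeneous ordinary differential equation y²·g''(y) = (12 + 4π²n²y²)·g(y) for all y > 0. If there exists a constant C > 0 such that |g(y)| ≤ C·y³ for all y ≥ 1 and |g(y)| ≤ C·y^{−2} for all 0 < y ≤ 1, then g is identically zero. -/

import Mathlib

/-!
Split `g` into the real functions `L ∘ g`, `L` a continuous linear functional; by Hahn–Banach it
suffices that each of them is `≤ 0`. Where `f = L ∘ g` is positive it is a subsolution,
`y² f'' ≥ 12 f`, while `φ(y) = y⁴ + y⁻³` solves `y² φ'' = 12 φ` and outgrows both `y³` at infinity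
and `y⁻²` at the origin. So `f - ε φ` is negative near `0` and near `∞` and convex wherever it is
positive; the maximum principle gives `f ≤ ε φ` for every `ε > 0`, hence `f ≤ 0`.
-/

section ModeEquation

open Set Filter Topology

theorem nonpos_on_Icc_of_deriv_deriv_pos {h : ℝ → ℝ} {a b : ℝ}
    (hcont : ContinuousOn h (Icc a b)) (ha : h a ≤ 0) (hb : h b ≤ 0)
    (hderiv2_pos : ∀ x ∈ Ioo a b, 0 < h x → 0 < deriv (deriv h) x) :
    ∀ x ∈ Icc a b, h x ≤ 0 := by
  intro x₀ hx₀
  by_contra! hpos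
  obtain ⟨c, hc, hmax⟩ := isCompact_Icc.exists_isMaxOn ⟨x₀, hx₀⟩ hcont
  have hhc : 0 < h c := hpos.trans_le (hmax hx₀)
  have hc' : c ∈ Ioo a b :=
    ⟨hc.1.lt_of_ne (by rintro rfl; linarith), hc.2.lt_of_ne (by rintro rfl; linarith)⟩
  have hloc_max : IsLocalMax h c := hmax.isLocalMax (Icc_mem_nhds hc'.1 hc'.2)
  have hloc_min : IsLocalMin h c :=
    isLocalMin_of_deriv_deriv_pos (hderiv2_pos c hc' hhc) hloc_max.deriv_eq_zero
      (hcont.continuousAt (Icc_mem_nhds hc'.1 hc'.2))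
  have hconst : h =ᶠ[𝓝 c] fun _ => h c := by
    filter_upwards [hloc_max, hloc_min] with x hx₁ hx₂ using le_antisymm hx₁ hx₂
  have := hderiv2_pos c hc' hhc
  rw [hconst.deriv.deriv_eq, deriv_const', deriv_const] at this
  exact this.false

noncomputable def modeBarrier (y : ℝ) : ℝ := y ^ 4 + y ^ (-3 : ℤ)

theorem modeBarrier_pos {y : ℝ} (hy : 0 < y) : 0 < modeBarrier y := by
  unfold modeBarrier; positivity

theorem hasDerivAt_modeBarrier {y : ℝ} (hy : y ≠ 0) :
    HasDerivAt modeBarrier (4 * y ^ 3 - 3 * y ^ (-4 : ℤ)) y := by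
  refine ((hasDerivAt_pow 4 y).add (hasDerivAt_zpow (-3) y (Or.inl hy))).congr_deriv ?_
  norm_num
  ring

theorem hasDerivAt_deriv_modeBarrier {y : ℝ} (hy : y ≠ 0) :
    HasDerivAt (deriv modeBarrier) (12 * y ^ 2 + 12 * y ^ (-5 : ℤ)) y := by
  have hderiv : deriv modeBarrier =ᶠ[𝓝 y] fun z => 4 * z ^ 3 - 3 * z ^ (-4 : ℤ) := by
    filter_upwards [isOpen_ne.mem_nhds hy] with z hz using (hasDerivAt_modeBarrier hz).deriv
  refine HasDerivAt.congr_of_eventuallyEq ?_ hderiv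
  refine (((hasDerivAt_pow 3 y).const_mul 4).sub
    ((hasDerivAt_zpow (-4) y (Or.inl hy)).const_mul 3)).congr_deriv ?_
  norm_num
  ring

theorem sq_mul_deriv_deriv_modeBarrier {y : ℝ} (hy : y ≠ 0) :
    y ^ 2 * deriv (deriv modeBarrier) y = 12 * modeBarrier y := by
  rw [(hasDerivAt_deriv_modeBarrier hy).deriv, modeBarrier]
  have : y ^ 2 * y ^ (-5 : ℤ) = y ^ (-3 : ℤ) := by
    rw [← zpow_natCast, ← zpow_add₀ hy]; norm_num
  linear_combination 12 * this

theorem le_mul_modeBarrier_of_subsolution {f : ℝ → ℝ} {C : ℝ}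
    (hd1 : ∀ y, 0 < y → DifferentiableAt ℝ f y)
    (hd2 : ∀ y, 0 < y → DifferentiableAt ℝ (deriv f) y)
    (hsub : ∀ y, 0 < y → 0 < f y → 12 * f y ≤ y ^ 2 * deriv (deriv f) y)
    (hinfty : ∀ y, 1 ≤ y → f y ≤ C * y ^ 3)
    (hzero : ∀ y, 0 < y → y ≤ 1 → f y ≤ C * y ^ (-2 : ℤ))
    {ε : ℝ} (hε : 0 < ε) {y₀ : ℝ} (hy₀ : 0 < y₀) :
    f y₀ ≤ ε * modeBarrier y₀ := by
  set h : ℝ → ℝ := fun y => f y - ε * modeBarrier y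
  obtain ⟨δ, ⟨hδ_pos, hδ_le⟩, hδ_C⟩ : ∃ δ, δ ∈ Ioc 0 (min y₀ 1) ∧ C * δ < ε :=
    (Eventually.and (Ioc_mem_nhdsGT (lt_min hy₀ one_pos)) (nhdsWithin_le_nhds
      (((continuous_const_mul C).tendsto' 0 0 (mul_zero C)).eventually (gt_mem_nhds hε)))).exists
  obtain ⟨M, hM_ge, hM_C⟩ : ∃ M, max y₀ 1 ≤ M ∧ C < ε * M :=
    ((eventually_ge_atTop _).and
      ((tendsto_id.const_mul_atTop hε).eventually_gt_atTop C)).exists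
  have hM_pos : 0 < M := one_pos.trans_le (le_of_max_le_right hM_ge)
  have hhδ : h δ ≤ 0 := by
    have hδ_inv : δ ^ (-2 : ℤ) = δ * δ ^ (-3 : ℤ) := by
      rw [← zpow_one_add₀ hδ_pos.ne']; norm_num
    have : f δ < ε * modeBarrier δ := calc
      f δ ≤ C * δ ^ (-2 : ℤ) := hzero δ hδ_pos (hδ_le.trans (min_le_right _ _))
      _ = C * δ * δ ^ (-3 : ℤ) := by rw [hδ_inv, mul_assoc]
      _ < ε * δ ^ (-3 : ℤ) := by gcongr
      _ < ε * modeBarrier δ := by unfold modeBarrier; gcongr; linarith [pow_pos hδ_pos 4]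
    linarith
  have hhM : h M ≤ 0 := by
    have : f M < ε * modeBarrier M := calc
      f M ≤ C * M ^ 3 := hinfty M (le_of_max_le_right hM_ge)
      _ < ε * M * M ^ 3 := by gcongr
      _ = ε * M ^ 4 := by ring
      _ < ε * modeBarrier M := by unfold modeBarrier; gcongr; linarith [zpow_pos hM_pos (-3)]
    linarith
  have hcont : ContinuousOn h (Icc δ M) := fun x hx =>
    have hx_pos : 0 < x := hδ_pos.trans_le hx.1
    ((hd1 x hx_pos).continuousAt.sub
      ((hasDerivAt_modeBarrier hx_pos.ne').continuousAt.const_mul ε)).continuousWithinAt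
  have hderiv2_pos : ∀ x ∈ Ioo δ M, 0 < h x → 0 < deriv (deriv h) x := by
    intro x hx hhx
    have hx_pos : 0 < x := hδ_pos.trans hx.1
    have hderiv : deriv h =ᶠ[𝓝 x] fun z => deriv f z - ε * deriv modeBarrier z := by
      filter_upwards [Ioi_mem_nhds hx_pos] with z hz
      rw [(hasDerivAt_modeBarrier hz.ne').deriv]
      exact ((hd1 z hz).hasDerivAt.sub ((hasDerivAt_modeBarrier hz.ne').const_mul ε)).deriv
    have hderiv2 : deriv (deriv h) x = deriv (deriv f) x - ε * deriv (deriv modeBarrier) x := by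
      rw [hderiv.deriv_eq, (hasDerivAt_deriv_modeBarrier hx_pos.ne').deriv]
      exact ((hd2 x hx_pos).hasDerivAt.sub
        ((hasDerivAt_deriv_modeBarrier hx_pos.ne').const_mul ε)).deriv
    have : 0 < x ^ 2 * deriv (deriv h) x := by
      have := hsub x hx_pos (by linarith [mul_pos hε (modeBarrier_pos hx_pos)])
      rw [hderiv2, mul_sub, mul_left_comm, sq_mul_deriv_deriv_modeBarrier hx_pos.ne']
      linarith
    exact pos_of_mul_pos_right this (sq_nonneg x)
  have := nonpos_on_Icc_of_deriv_deriv_pos hcont hhδ hhM hderiv2_pos y₀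
    ⟨hδ_le.trans (min_le_left _ _), le_of_max_le_left hM_ge⟩
  linarith

theorem nonpos_of_subsolution {f : ℝ → ℝ} {C : ℝ}
    (hd1 : ∀ y, 0 < y → DifferentiableAt ℝ f y)
    (hd2 : ∀ y, 0 < y → DifferentiableAt ℝ (deriv f) y)
    (hsub : ∀ y, 0 < y → 0 < f y → 12 * f y ≤ y ^ 2 * deriv (deriv f) y)
    (hinfty : ∀ y, 1 ≤ y → f y ≤ C * y ^ 3)
    (hzero : ∀ y, 0 < y → y ≤ 1 → f y ≤ C * y ^ (-2 : ℤ)) {y : ℝ} (hy : 0 < y) :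
    f y ≤ 0 := by
  have hlim : Tendsto (fun ε => ε * modeBarrier y) (𝓝[>] 0) (𝓝 0) :=
    ((continuous_mul_const _).tendsto' 0 0 (zero_mul _)).mono_left nhdsWithin_le_nhds
  exact ge_of_tendsto hlim (eventually_mem_nhdsWithin.mono fun ε hε =>
    le_mul_modeBarrier_of_subsolution hd1 hd2 hsub hinfty hzero hε hy)

variable {E : Type*} [NormedAddCommGroup E] [NormedSpace ℝ E] {K C : ℝ} {g : ℝ → E}

theorem deriv_clm_comp_eventuallyEq (L : StrongDual ℝ E)
    (hd1 : ∀ y, 0 < y → DifferentiableAt ℝ g y) {y : ℝ} (hy : 0 < y) :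
    deriv (fun z => L (g z)) =ᶠ[𝓝 y] fun z => L (deriv g z) := by
  filter_upwards [Ioi_mem_nhds hy] with z hz
  exact (L.hasFDerivAt.comp_hasDerivAt z (hd1 z hz).hasDerivAt).deriv

theorem clm_comp_nonpos_of_mode_equation (hK : 0 ≤ K) (L : StrongDual ℝ E)
    (hd1 : ∀ y, 0 < y → DifferentiableAt ℝ g y)
    (hd2 : ∀ y, 0 < y → DifferentiableAt ℝ (deriv g) y)
    (hode : ∀ y, 0 < y → y ^ 2 • deriv (deriv g) y = (12 + K * y ^ 2) • g y)
    (hinfty : ∀ y, 1 ≤ y → ‖g y‖ ≤ C * y ^ 3)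
    (hzero : ∀ y, 0 < y → y ≤ 1 → ‖g y‖ ≤ C * y ^ (-2 : ℤ)) {y : ℝ} (hy : 0 < y) :
    L (g y) ≤ 0 := by
  have hbound : ∀ x b, ‖g x‖ ≤ C * b → L (g x) ≤ ‖L‖ * C * b := fun x b hb => calc
    L (g x) ≤ ‖L (g x)‖ := Real.le_norm_self _
    _ ≤ ‖L‖ * ‖g x‖ := L.le_opNorm _
    _ ≤ ‖L‖ * C * b := by rw [mul_assoc]; gcongr
  refine nonpos_of_subsolution (f := fun z => L (g z)) (C := ‖L‖ * C)
    (fun y hy => L.differentiableAt.comp y (hd1 y hy))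
    (fun y hy => (L.differentiableAt.comp y (hd2 y hy)).congr_of_eventuallyEq
      (deriv_clm_comp_eventuallyEq L hd1 hy))
    (fun x hx hpos => ?_) (fun x hx => hbound x _ (hinfty x hx))
    (fun x hx hx1 => hbound x _ (hzero x hx hx1)) hy
  have hderiv2 : deriv (deriv fun z => L (g z)) x = L (deriv (deriv g) x) := by
    rw [(deriv_clm_comp_eventuallyEq L hd1 hx).deriv_eq]
    exact (L.hasFDerivAt.comp_hasDerivAt x (hd2 x hx).hasDerivAt).deriv
  have hL_ode : x ^ 2 * L (deriv (deriv g) x) = (12 + K * x ^ 2) * L (g x) := by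
    simpa only [map_smul, smul_eq_mul] using congrArg L (hode x hx)
  rw [hderiv2, hL_ode]
  nlinarith [mul_nonneg (mul_nonneg hK (sq_nonneg x)) hpos.le]

theorem eq_zero_of_mode_equation (hK : 0 ≤ K)
    (hd1 : ∀ y, 0 < y → DifferentiableAt ℝ g y)
    (hd2 : ∀ y, 0 < y → DifferentiableAt ℝ (deriv g) y)
    (hode : ∀ y, 0 < y → y ^ 2 • deriv (deriv g) y = (12 + K * y ^ 2) • g y)
    (hinfty : ∀ y, 1 ≤ y → ‖g y‖ ≤ C * y ^ 3)
    (hzero : ∀ y, 0 < y → y ≤ 1 → ‖g y‖ ≤ C * y ^ (-2 : ℤ)) {y : ℝ} (hy : 0 < y) :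
    g y = 0 := by
  refine SeparatingDual.eq_zero_of_forall_dual_eq_zero (R := ℝ) fun L => le_antisymm ?_ ?_
  · exact clm_comp_nonpos_of_mode_equation hK L hd1 hd2 hode hinfty hzero hy
  · simpa using clm_comp_nonpos_of_mode_equation hK (-L) hd1 hd2 hode hinfty hzero hy

end ModeEquation

open Real

theorem homogeneous_solution_zero (n : ℤ) (g : ℝ → ℂ)
    (hd1 : ∀ y : ℝ, 0 < y → DifferentiableAt ℝ g y)
    (hd2 : ∀ y : ℝ, 0 < y → DifferentiableAt ℝ (deriv g) y)
    (hode : ∀ y : ℝ, 0 < y →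
      (y : ℂ) ^ 2 * deriv (deriv g) y =
        (((12 : ℝ) + 4 * π ^ 2 * (n : ℝ) ^ 2 * y ^ 2 : ℝ) : ℂ) * g y)
    (C : ℝ)
    (hinfty : ∀ y : ℝ, 1 ≤ y → ‖g y‖ ≤ C * y ^ 3)
    (hzero : ∀ y : ℝ, 0 < y → y ≤ 1 → ‖g y‖ ≤ C * y ^ (-2 : ℤ)) :
    ∀ y : ℝ, 0 < y → g y = 0 := by
  refine fun y hy => eq_zero_of_mode_equation (K := 4 * π ^ 2 * (n : ℝ) ^ 2) (by positivity)
    hd1 hd2 (fun x hx => ?_) hinfty hzero hy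
  simpa only [Complex.real_smul, Complex.ofReal_pow, mul_assoc] using hode x hx
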